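/- arXiv:1601.05176 — 4 statements merged into one kernel-verified Lean document; each statement's English description precedes it below -/
import Mathlib

section
/- Trace concatenation is left-cancellative: for all Mazurkiewicz traces u, v, w over a dependency alphabet, if uv = uw then v = w. -/
namespace MazTrace

variable {A : Type*}

/-- Smallest equivalence on words over `A` generated by commuting two adjacent
independent letters (`a I b` iff `¬ D a b`). -/
inductive TraceRel (D : A → A → Prop) : List A → List A → Prop
  | refl (u : List A) : TraceRel D u u
  | swap (u v : List A) (a b : A) (h : ¬ D a b) :
      TraceRel D (u ++ a :: b :: v) (u ++ b :: a :: v)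
  | symm {u v : List A} : TraceRel D u v → TraceRel D v u
  | trans {u v w : List A} : TraceRel D u v → TraceRel D v w → TraceRel D u w

theorem TraceRel.append_right {D : A → A → Prop} {u u' : List A} (w : List A)
    (h : TraceRel D u u') : TraceRel D (u ++ w) (u' ++ w) := by
  induction h with
  | refl u => exact .refl _
  | swap x y a b hab =>
      simpa [List.append_assoc] using TraceRel.swap (D := D) x (y ++ w) a b hab
  | symm _ ih => exact ih.symm
  | trans _ _ ih1 ih2 => exact ih1.trans ih2

theorem TraceRel.append_left {D : A → A → Prop} {v v' : List A} (w : List A)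
    (h : TraceRel D v v') : TraceRel D (w ++ v) (w ++ v') := by
  induction h with
  | refl u => exact .refl _
  | swap x y a b hab =>
      simpa [List.append_assoc] using TraceRel.swap (D := D) (w ++ x) y a b hab
  | symm _ ih => exact ih.symm
  | trans _ _ ih1 ih2 => exact ih1.trans ih2

def traceSetoid (D : A → A → Prop) : Setoid (List A) :=
  ⟨TraceRel D, ⟨TraceRel.refl, TraceRel.symm, TraceRel.trans⟩⟩

/-- A Mazurkiewicz trace: an equivalence class of words. -/
def Trace (D : A → A → Prop) : Type _ := Quotient (traceSetoid D)

namespace Trace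

variable {D : A → A → Prop}

/-- The trace of a word. -/
def mk (D : A → A → Prop) (u : List A) : Trace D := Quotient.mk (traceSetoid D) u

/-- The empty trace. -/
instance : One (Trace D) := ⟨mk D []⟩

/-- Concatenation of traces, induced by concatenation of words. -/
instance : Mul (Trace D) :=
  ⟨fun s t => Quotient.liftOn₂ s t (fun u v => mk D (u ++ v))
    (fun _ _ _ _ hu hv =>
      Quotient.sound ((hu.append_right _).trans (TraceRel.append_left _ hv)))⟩

instance : Nonempty (Trace D) := ⟨1⟩

/-- Length of a trace: the length of any of its linearizations. -/
def length (t : Trace D) : ℕ :=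
  Quotient.liftOn t List.length (by
    intro u v h
    induction h with
    | refl u => rfl
    | swap x y a b hab => simp
    | symm _ ih => exact ih.symm
    | trans _ _ ih1 ih2 => exact ih1.trans ih2)

/-- The set of letters of a trace. -/
def alph (t : Trace D) : Set A :=
  Quotient.liftOn t (fun u => {a | a ∈ u}) (by
    intro u v h
    induction h with
    | refl u => rfl
    | swap x y a b hab => ext c; simp [List.mem_append]; tauto
    | symm _ ih => exact ih.symm
    | trans _ _ ih1 ih2 => exact ih1.trans ih2)

/-- Prefix order on traces: `s ⊑ t` iff `s * w = t` for some trace `w`. -/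
def Prefix (s t : Trace D) : Prop := ∃ w, s * w = t

/-- `t I B` : every letter of the trace `t` is independent of every element of `B`. -/
def IndepSet (t : Trace D) (B : Set A) : Prop := ∀ a ∈ t.alph, ∀ b ∈ B, ¬ D a b

/-- `s I t` : every letter of `s` is independent of every letter of `t`. -/
def Indep (s t : Trace D) : Prop := ∀ a ∈ s.alph, ∀ b ∈ t.alph, ¬ D a b

/-- `a I t` : the letter `a` is independent of every letter of the trace `t`. -/
def IndepLetter (a : A) (t : Trace D) : Prop := ∀ c ∈ t.alph, ¬ D a c

/-- `w` is the `B`-view of `t`: the shortest prefix of `t` such that `t = w·v`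
for some trace `v` with `v I B`. -/
def IsView (B : Set A) (t w : Trace D) : Prop :=
  (∃ v, w * v = t ∧ v.IndepSet B) ∧
  ∀ w' v', w' * v' = t → v'.IndepSet B → w.length ≤ w'.length

/-- The `B`-view of a trace. -/
noncomputable def view (B : Set A) (t : Trace D) : Trace D :=
  Classical.epsilon (IsView B t)

/-- A trace is `B`-prime if every linearization of it ends with a letter of `B`. -/
def IsBPrime (B : Set A) (t : Trace D) : Prop :=
  ∀ u : List A, mk D u = t → ∀ a : A, u.getLast? = some a → a ∈ B

/-- A trace is prime if all its linearizations have the same last letter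
(the empty trace counts as prime). -/
def IsPrime (t : Trace D) : Prop :=
  ∀ u v : List A, mk D u = t → mk D v = t → u.getLast? = v.getLast?

end Trace

end MazTrace

/-!
Two words are trace equivalent iff their projections onto every pair of dependent letters
agree: projections are invariant under swapping independent letters, and conversely the first
letter `a` of one word can be moved to the front of the other, since the projections onto the
pairs `{a, c}` show that no letter before its first `a` depends on `a`. Projection commutes
with concatenation and words cancel on the left, so traces cancel on the left.
-/

theorem List.eq_nil_of_cons_eq_append_cons {α : Type*} {a : α} {l m r : List α}
    (h : a :: l = m ++ a :: r) (ha : a ∉ m) : m = [] := by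
  cases m with
  | nil => rfl
  | cons b m =>
    obtain ⟨rfl, -⟩ := List.cons.inj h
    exact absurd List.mem_cons_self ha

namespace MazTrace

variable {A : Type*} {D : A → A → Prop}

theorem TraceRel.middle_of_indep {a : A} :
    ∀ {p : List A} (q : List A), (∀ c ∈ p, ¬ D c a) → TraceRel D (p ++ a :: q) (a :: (p ++ q))
  | [], _, _ => .refl _
  | c :: p, q, hp => by
    have hmove : TraceRel D (c :: (p ++ a :: q)) (c :: a :: (p ++ q)) :=
      (middle_of_indep q fun x hx => hp x (List.mem_cons_of_mem c hx)).append_left [c]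
    exact hmove.trans (.swap [] _ c a (hp c List.mem_cons_self))

section Projection

variable [DecidableEq A]

def proj (a b : A) (u : List A) : List A :=
  u.filter fun c => c = a ∨ c = b

theorem proj_append (a b : A) (u v : List A) : proj a b (u ++ v) = proj a b u ++ proj a b v :=
  List.filter_append ..

theorem proj_cons_self (a b : A) (u : List A) : proj a b (a :: u) = a :: proj a b u := by
  simp [proj]

theorem proj_cons_cancel {a b c : A} {u v : List A} (h : proj a b (c :: u) = proj a b (c :: v)) :
    proj a b u = proj a b v := by
  by_cases hc : c = a ∨ c = b <;> simpa [proj, List.filter_cons, hc] using h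

theorem TraceRel.proj_eq (hrefl : ∀ a, D a a) (hsymm : ∀ a b, D a b → D b a)
    {u v : List A} (h : TraceRel D u v) {a b : A} (hab : D a b) : proj a b u = proj a b v := by
  induction h with
  | refl u => rfl
  | swap x y c d hcd =>
    have hnot_both : ¬ ((c = a ∨ c = b) ∧ (d = a ∨ d = b)) := by
      rintro ⟨rfl | rfl, rfl | rfl⟩ <;> grind
    simp only [proj_append]
    by_cases hc : c = a ∨ c = b <;> by_cases hd : d = a ∨ d = b <;> simp_all [proj]
  | symm _ ih => exact ih.symm
  | trans _ _ ih₁ ih₂ => exact ih₁.trans ih₂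

theorem TraceRel.of_proj_eq (hrefl : ∀ a, D a a) (hsymm : ∀ a b, D a b → D b a) :
    ∀ {u v : List A}, (∀ a b, D a b → proj a b u = proj a b v) → TraceRel D u v
  | [], [], _ => .refl _
  | [], c :: _, h => by simpa [proj] using h c c (hrefl c)
  | a :: u, v, h => by
    have hav : a ∈ v := by
      have : a ∈ proj a a (a :: u) := proj_cons_self a a u ▸ List.mem_cons_self
      exact List.mem_of_mem_filter (h a a (hrefl a) ▸ this)
    obtain ⟨p, q, rfl, hap⟩ := List.eq_append_cons_of_mem hav
    have hindep : ∀ c ∈ p, ¬ D c a := by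
      intro c hc hca
      have hsplit : a :: proj a c u = proj a c p ++ a :: proj a c q := by
        simpa only [proj_append, proj_cons_self] using h a c (hsymm c a hca)
      have hnil := List.eq_nil_of_cons_eq_append_cons hsplit
        fun ha => hap (List.mem_of_mem_filter ha)
      exact List.filter_eq_nil_iff.1 hnil c hc (by simp)
    have hfront := TraceRel.middle_of_indep q hindep
    have htail : TraceRel D u (p ++ q) := of_proj_eq hrefl hsymm fun b c hbc =>
      proj_cons_cancel ((h b c hbc).trans (hfront.proj_eq hrefl hsymm hbc))
    exact (htail.append_left [a]).trans hfront.symm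

end Projection

theorem TraceRel.append_cancel_left (hrefl : ∀ a, D a a) (hsymm : ∀ a b, D a b → D b a)
    {l v w : List A} (h : TraceRel D (l ++ v) (l ++ w)) : TraceRel D v w := by
  classical
  refine of_proj_eq hrefl hsymm fun a b hab => ?_
  simpa only [proj_append, List.append_cancel_left_eq] using h.proj_eq hrefl hsymm hab

end MazTrace

open MazTrace in
theorem trace_mul_left_cancel_general {A : Type*} (D : A → A → Prop)
    (hrefl : ∀ a, D a a) (hsymm : ∀ a b, D a b → D b a)
    (u v w : Trace D) (h : u * v = u * w) : v = w := by
  induction u using Quotient.ind with | _ lu =>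
  induction v using Quotient.ind with | _ lv =>
  induction w using Quotient.ind with | _ lw =>
  exact Quotient.sound (TraceRel.append_cancel_left hrefl hsymm (Quotient.exact h))

open MazTrace in
/-- Trace concatenation is left-cancellative: if `uv = uw` then `v = w`. -/
theorem trace_mul_left_cancel {A : Type*} [Finite A] (D : A → A → Prop)
    (hrefl : ∀ a, D a a) (hsymm : ∀ a b, D a b → D b a)
    (u v w : Trace D) (h : u * v = u * w) : v = w :=
  trace_mul_left_cancel_general D hrefl hsymm u v w h
end

section
/- The prefix order on traces is left-cancellative: for all Mazurkiewicz traces u, v, w over a dependency alphabet, if uv ⊑ uw then v ⊑ w. -/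
/-
Erasing the first occurrence of a letter commutes with trace equivalence: in a swap `c d ↦ d c`
at most one of the two swapped letters is the erased one, since no letter is independent of
itself. Cancelling a common first letter is the special case of erasing it.
-/

namespace MazTrace

variable {A : Type*} {D : A → A → Prop}

lemma TraceRel.erase_swap [DecidableEq A] (hrefl : ∀ a, D a a) {c d : A} (hcd : ¬ D c d)
    (a : A) (l : List A) : TraceRel D ((c :: d :: l).erase a) ((d :: c :: l).erase a) := by
  by_cases hc : c = a <;> by_cases hd : d = a
  · subst hc hd
    exact absurd (hrefl _) hcd
  · subst hc
    simp [hd, TraceRel.refl]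
  · subst hd
    simp [hc, TraceRel.refl]
  · simpa [List.erase_cons, hc, hd] using TraceRel.swap (D := D) [] (l.erase a) c d hcd

lemma TraceRel.erase [DecidableEq A] (hrefl : ∀ a, D a a) (a : A) {u v : List A}
    (h : TraceRel D u v) : TraceRel D (u.erase a) (v.erase a) := by
  induction h with
  | refl u => exact .refl _
  | swap x y c d hcd =>
    by_cases hx : a ∈ x
    · rw [List.erase_append_left _ hx, List.erase_append_left _ hx]
      exact .swap _ _ _ _ hcd
    · rw [List.erase_append_right _ hx, List.erase_append_right _ hx]
      exact (erase_swap hrefl hcd a y).append_left x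
  | symm _ ih => exact ih.symm
  | trans _ _ ih₁ ih₂ => exact ih₁.trans ih₂

lemma TraceRel.of_append_left (hrefl : ∀ a, D a a) {s t : List A} :
    ∀ u : List A, TraceRel D (u ++ s) (u ++ t) → TraceRel D s t
  | [], h => h
  | a :: u, h => by
    classical
    exact of_append_left hrefl u (by simpa using h.erase hrefl a)

namespace Trace

protected lemma mul_assoc (s t r : Trace D) : s * t * r = s * (t * r) := by
  induction s using Quotient.inductionOn
  induction t using Quotient.inductionOn
  induction r using Quotient.inductionOn
  exact congrArg (mk D) (List.append_assoc _ _ _)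

protected lemma mul_left_cancel (hrefl : ∀ a, D a a) {u s t : Trace D} (h : u * s = u * t) :
    s = t := by
  induction u using Quotient.inductionOn
  induction s using Quotient.inductionOn
  induction t using Quotient.inductionOn
  exact Quotient.sound (TraceRel.of_append_left hrefl _ (Quotient.exact h))

end Trace

end MazTrace

open MazTrace in
theorem trace_prefix_left_cancel_general {A : Type*} (D : A → A → Prop)
    (hrefl : ∀ a, D a a)
    (u v w : Trace D) (h : (u * v).Prefix (u * w)) : v.Prefix w := by
  obtain ⟨x, hx⟩ := h
  rw [Trace.mul_assoc] at hx
  exact ⟨x, Trace.mul_left_cancel hrefl hx⟩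

open MazTrace in
/-- The prefix order on traces is left-cancellative: if `uv ⊑ uw` then `v ⊑ w`. -/
theorem trace_prefix_left_cancel {A : Type*} [Finite A] (D : A → A → Prop)
    (hrefl : ∀ a, D a a) (hsymm : ∀ a b, D a b → D b a)
    (u v w : Trace D) (h : (u * v).Prefix (u * w)) : v.Prefix w :=
  trace_prefix_left_cancel_general D hrefl u v w h
end

section
/- Levi-style decomposition for traces: for all traces x, u, v over a dependency alphabet, if x ⊑ uv then there exist traces x0, x1, x2, x3 such that x = x0·x1, u = x0·x2, v = x1·x3, and x2 I x1 (every letter of x2 is independent of every letter of x1). -/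
/-!
Levi's lemma is proved on representative words, by induction on the first factor of
`u ++ v ≈ x ++ y`. The first letter `a` of `u` occurs in `x ++ y` preceded only by letters
independent of `a`, and deleting both occurrences of `a` keeps the words equivalent; this
letter cancellation follows the occurrence of `a` along a chain of adjacent swaps. If the
occurrence lies in `x`, then `a` joins the common prefix of `u` and `x`; if it lies in `y`,
then `a` has commuted past all of `x`, so it commutes with the part of `x` taken from `v`.
-/

theorem List.append_cons_eq_append {α : Type*} {l₁ l₂ x y : List α} {a : α}
    (h : l₁ ++ a :: l₂ = x ++ y) :
    (∃ t, x = l₁ ++ a :: t ∧ l₂ = t ++ y) ∨ ∃ t, l₁ = x ++ t ∧ y = t ++ a :: l₂ := by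
  rcases List.append_eq_append_iff.mp h with ⟨_ | ⟨b, t⟩, rfl, ht⟩ | ⟨t, rfl, rfl⟩
  · exact .inr ⟨[], by simp, by simpa using ht.symm⟩
  · obtain ⟨rfl, rfl⟩ := List.cons.inj ht
    exact .inl ⟨t, rfl, rfl⟩
  · exact .inr ⟨t, rfl, rfl⟩

namespace MazTrace

variable {A : Type*} {D : A → A → Prop}

def SwapStep (D : A → A → Prop) (u v : List A) : Prop :=
  ∃ p q a b, ¬ D a b ∧ u = p ++ a :: b :: q ∧ v = p ++ b :: a :: q

namespace TraceRel

theorem cons (a : A) {u v : List A} (h : TraceRel D u v) : TraceRel D (a :: u) (a :: v) :=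
  append_left [a] h

theorem mem_iff {u v : List A} (h : TraceRel D u v) (b : A) : b ∈ u ↔ b ∈ v := by
  induction h with
  | refl u => rfl
  | swap x y a b hab => simp only [List.mem_append, List.mem_cons]; tauto
  | symm _ ih => exact ih.symm
  | trans _ _ ih₁ ih₂ => exact ih₁.trans ih₂

theorem reflTransGen_swapStep (hD : ∀ a b, D a b → D b a) {u v : List A}
    (h : TraceRel D u v) : Relation.ReflTransGen (SwapStep D) u v := by
  induction h with
  | refl u => exact .refl
  | swap x y a b hab => exact .single ⟨x, y, a, b, hab, rfl, rfl⟩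
  | symm _ ih =>
    have : Std.Symm (SwapStep D) := ⟨fun _ _ ⟨p, q, a, b, hab, hu, hv⟩ =>
      ⟨p, q, b, a, fun hba => hab (hD b a hba), hv, hu⟩⟩
    exact Std.Symm.symm _ _ ih
  | trans _ _ ih₁ ih₂ => exact ih₁.trans ih₂

theorem cons_append_comm {a : A} {l : List A} (ha : ∀ b ∈ l, ¬ D a b) (m : List A) :
    TraceRel D (a :: (l ++ m)) (l ++ a :: m) := by
  induction l with
  | nil => exact .refl _
  | cons b l ih =>
    have hab : ¬ D a b := ha b List.mem_cons_self
    exact (swap [] (l ++ m) a b hab).trans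
      ((ih fun c hc => ha c (List.mem_cons_of_mem b hc)).cons b)

end TraceRel

theorem SwapStep.exists_split {a : A} {n₁ n₂ n : List A} (hn₁ : ∀ b ∈ n₁, ¬ D a b)
    (h : SwapStep D (n₁ ++ a :: n₂) n) :
    ∃ n₁' n₂', n = n₁' ++ a :: n₂' ∧ (∀ b ∈ n₁', ¬ D a b) ∧
      TraceRel D (n₁ ++ n₂) (n₁' ++ n₂') := by
  obtain ⟨p, q, e, f, hef, heq, rfl⟩ := h
  rcases List.append_cons_eq_append heq with ⟨t, rfl, rfl⟩ | ⟨t, rfl, ht⟩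
  · refine ⟨n₁, t ++ f :: e :: q, by simp, hn₁, ?_⟩
    simpa using TraceRel.swap (D := D) (n₁ ++ t) q e f hef
  · rcases t with _ | ⟨e', _ | ⟨f', t'⟩⟩ <;>
      simp only [List.nil_append, List.cons_append, List.cons.injEq] at ht
    · obtain ⟨rfl, rfl⟩ := ht
      rw [List.append_nil] at hn₁ ⊢
      refine ⟨p ++ [f], q, by simp, ?_, by simpa using TraceRel.refl _⟩
      simpa [or_imp, forall_and] using ⟨hn₁, hef⟩
    · obtain ⟨rfl, rfl, rfl⟩ := ht
      exact ⟨p, e :: q, by simp, fun b hb => hn₁ b (by simp [hb]), by simpa using TraceRel.refl _⟩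
    · obtain ⟨rfl, rfl, rfl⟩ := ht
      refine ⟨p ++ f :: e :: t', n₂, by simp, fun b hb => hn₁ b ?_, ?_⟩
      · simp only [List.mem_append, List.mem_cons] at hb ⊢
        tauto
      · simpa using TraceRel.swap (D := D) p (t' ++ n₂) e f hef

theorem TraceRel.exists_split_of_cons (hD : ∀ a b, D a b → D b a) {a : A} {m n : List A}
    (h : TraceRel D (a :: m) n) :
    ∃ n₁ n₂, n = n₁ ++ a :: n₂ ∧ (∀ b ∈ n₁, ¬ D a b) ∧ TraceRel D m (n₁ ++ n₂) := by
  have hsteps := h.reflTransGen_swapStep hD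
  clear h
  induction hsteps with
  | refl => exact ⟨[], m, rfl, by simp, .refl _⟩
  | tail _ hstep ih =>
    obtain ⟨n₁, n₂, rfl, hn₁, hm⟩ := ih
    obtain ⟨n₁', n₂', rfl, hn₁', hn⟩ := hstep.exists_split hn₁
    exact ⟨n₁', n₂', rfl, hn₁', hm.trans hn⟩

theorem TraceRel.levi (hD : ∀ a b, D a b → D b a) {u v x y : List A}
    (h : TraceRel D (u ++ v) (x ++ y)) :
    ∃ p q r s : List A, TraceRel D u (p ++ q) ∧ TraceRel D v (r ++ s) ∧
      TraceRel D x (p ++ r) ∧ TraceRel D y (q ++ s) ∧ ∀ a ∈ q, ∀ b ∈ r, ¬ D a b := by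
  induction u generalizing x y with
  | nil => exact ⟨[], [], x, y, .refl _, h, .refl _, .refl _, by simp⟩
  | cons a u ih =>
    obtain ⟨n₁, n₂, hn, hn₁, hm⟩ := h.exists_split_of_cons hD
    rcases List.append_cons_eq_append hn.symm with ⟨t, rfl, rfl⟩ | ⟨t, rfl, rfl⟩
    · obtain ⟨p, q, r, s, hu, hv, hx, hy, hqr⟩ := ih (x := n₁ ++ t) (y := y) (by simpa using hm)
      refine ⟨a :: p, q, r, s, hu.cons a, hv, ?_, hy, hqr⟩
      exact (TraceRel.cons_append_comm hn₁ t).symm.trans (by simpa using hx.cons a)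
    · obtain ⟨p, q, r, s, hu, hv, hx, hy, hqr⟩ := ih (x := x) (y := t ++ n₂) (by simpa using hm)
      have hax : ∀ b ∈ p ++ r, ¬ D a b :=
        fun b hb => hn₁ b (List.mem_append_left t ((hx.mem_iff b).mpr hb))
      refine ⟨p, a :: q, r, s, ?_, hv, hx, ?_, ?_⟩
      · exact (hu.cons a).trans
          (TraceRel.cons_append_comm (fun b hb => hax b (List.mem_append_left r hb)) q)
      · exact (TraceRel.cons_append_comm
          (fun b hb => hn₁ b (List.mem_append_right x hb)) n₂).symm.trans (hy.cons a)
      · rintro c (_ | ⟨_, hc⟩) b hb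
        · exact hax b (List.mem_append_right p hb)
        · exact hqr c hc b hb

end MazTrace

open MazTrace in
theorem trace_levi_decomposition_general {A : Type*} (D : A → A → Prop)
    (hsymm : ∀ a b, D a b → D b a)
    (x u v : Trace D) (h : x.Prefix (u * v)) :
    ∃ x0 x1 x2 x3 : Trace D,
      x = x0 * x1 ∧ u = x0 * x2 ∧ v = x1 * x3 ∧ x2.Indep x1 := by
  obtain ⟨w, hw⟩ := h
  obtain ⟨x, rfl⟩ := Quotient.exists_rep x
  obtain ⟨w, rfl⟩ := Quotient.exists_rep w
  obtain ⟨u, rfl⟩ := Quotient.exists_rep u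
  obtain ⟨v, rfl⟩ := Quotient.exists_rep v
  obtain ⟨p, q, r, s, hx, hw, hu, hv, hqr⟩ := TraceRel.levi hsymm (Quotient.exact hw)
  refine ⟨Trace.mk D p, Trace.mk D q, Trace.mk D r, Trace.mk D s,
    Quotient.sound hx, Quotient.sound hu, Quotient.sound hv, ?_⟩
  exact fun b hb c hc hbc => hqr c hc b hb (hsymm b c hbc)

open MazTrace in
/-- Levi-style decomposition for traces: if `x ⊑ uv` then there exist
`x0, x1, x2, x3` with `x = x0·x1`, `u = x0·x2`, `v = x1·x3` and `x2 I x1`. -/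
theorem trace_levi_decomposition {A : Type*} [Finite A] (D : A → A → Prop)
    (hrefl : ∀ a, D a a) (hsymm : ∀ a b, D a b → D b a)
    (x u v : Trace D) (h : x.Prefix (u * v)) :
    ∃ x0 x1 x2 x3 : Trace D,
      x = x0 * x1 ∧ u = x0 * x2 ∧ v = x1 * x3 ∧ x2.Indep x1 :=
  trace_levi_decomposition_general D hsymm x u v h
end

section
/- For every subset B ⊆ A and all traces u, v over a dependency alphabet: u ⊑ view_B(uv) if and only if view_B(uv) = u·view_B(v). -/
/-!
Scanning a linearization from the right and keeping a letter iff it depends on `B` or on a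
letter already kept yields a word `viewWord D B c`; this is invariant under commutation of
independent letters and represents `view_B`. For words `p`, `q` one gets
`viewWord (p ++ q) = k ++ viewWord q` with `k` a subword of `p`. If `p` is a trace prefix of it,
then `k = p`: a letter `x` dropped from `p` must, by counting, occur in `viewWord q`, and since
`D x x` every occurrence of `x` in `p` depends on that kept one and is kept as well.
-/

namespace MazTrace

variable {A : Type*} {D : A → A → Prop}

namespace Trace

@[elab_as_elim]
theorem ind {motive : Trace D → Prop} (mk_case : ∀ u, motive (mk D u)) (t : Trace D) : motive t :=
  Quotient.ind mk_case t

theorem mk_mul_mk (u v : List A) : mk D u * mk D v = mk D (u ++ v) := rfl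

theorem mk_eq_mk {u v : List A} : mk D u = mk D v ↔ TraceRel D u v := Quotient.eq

theorem indepSet_mk {B : Set A} {u : List A} :
    (mk D u).IndepSet B ↔ ∀ x ∈ u, ∀ b ∈ B, ¬ D x b := Iff.rfl

end Trace

namespace TraceRel

theorem perm {u v : List A} (h : TraceRel D u v) : u.Perm v := by
  induction h with
  | refl u => exact .refl u
  | swap p s a b _ => exact (List.Perm.swap b a s).append_left p
  | symm _ ih => exact ih.symm
  | trans _ _ ih1 ih2 => exact ih1.trans ih2

theorem cons_append_of_indep {x : A} (m r : List A) (h : ∀ y ∈ m, ¬ D x y) :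
    TraceRel D (x :: (m ++ r)) (m ++ x :: r) := by
  induction m with
  | nil => exact .refl _
  | cons y m ih =>
    have hswap : TraceRel D (x :: y :: (m ++ r)) (y :: x :: (m ++ r)) :=
      TraceRel.swap [] (m ++ r) x y (h y List.mem_cons_self)
    exact hswap.trans ((ih fun z hz => h z (List.mem_cons_of_mem y hz)).append_left [y])

end TraceRel

def DependsOn (D : A → A → Prop) (B : Set A) (l : List A) (x : A) : Prop :=
  (∃ b ∈ B, D x b) ∨ ∃ y ∈ l, D x y

theorem dependsOn_cons_iff {B : Set A} {l : List A} {a b : A} (hab : ¬ D a b) :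
    DependsOn D B (b :: l) a ↔ DependsOn D B l a := by
  simp only [DependsOn, List.mem_cons, exists_eq_or_imp, hab, false_or]

theorem DependsOn.of_perm {B : Set A} {l l' : List A} {x : A} (h : l.Perm l')
    (hx : DependsOn D B l x) : DependsOn D B l' x := by
  simpa only [DependsOn, h.mem_iff] using hx

open Classical in
noncomputable def viewWord (D : A → A → Prop) (B : Set A) : List A → List A
  | [] => []
  | x :: xs => if DependsOn D B (viewWord D B xs) x then x :: viewWord D B xs else viewWord D B xs

variable {B : Set A}

theorem viewWord_swap {a b : A} (hab : ¬ D a b) (hba : ¬ D b a) (s : List A) :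
    TraceRel D (viewWord D B (a :: b :: s)) (viewWord D B (b :: a :: s)) := by
  by_cases ha : DependsOn D B (viewWord D B s) a <;>
  by_cases hb : DependsOn D B (viewWord D B s) b <;>
  simp only [viewWord, dependsOn_cons_iff hab, dependsOn_cons_iff hba, ha, hb, if_true, if_false]
  · exact TraceRel.swap [] _ a b hab
  all_goals exact .refl _

theorem viewWord_cons_congr {l l' : List A} (h : TraceRel D (viewWord D B l) (viewWord D B l'))
    (x : A) : TraceRel D (viewWord D B (x :: l)) (viewWord D B (x :: l')) := by
  have hdep : DependsOn D B (viewWord D B l) x ↔ DependsOn D B (viewWord D B l') x :=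
    ⟨.of_perm h.perm, .of_perm h.perm.symm⟩
  by_cases hx : DependsOn D B (viewWord D B l) x
  · rw [viewWord, viewWord, if_pos hx, if_pos (hdep.mp hx)]
    exact h.append_left [x]
  · rw [viewWord, viewWord, if_neg hx, if_neg (mt hdep.mpr hx)]
    exact h

theorem TraceRel.viewWord (hsymm : ∀ a b, D a b → D b a) {u v : List A}
    (h : TraceRel D u v) : TraceRel D (viewWord D B u) (viewWord D B v) := by
  induction h with
  | refl u => exact .refl _
  | symm _ ih => exact ih.symm
  | trans _ _ ih1 ih2 => exact ih1.trans ih2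
  | swap p s a b hab =>
    induction p with
    | nil => exact viewWord_swap hab (fun h => hab (hsymm b a h)) s
    | cons x p ih => exact viewWord_cons_congr ih x

theorem viewWord_eq_nil {q : List A} (hq : ∀ x ∈ q, ∀ b ∈ B, ¬ D x b) : viewWord D B q = [] := by
  induction q with
  | nil => rfl
  | cons x xs ih =>
    have hnil := ih fun y hy => hq y (List.mem_cons_of_mem x hy)
    have hx : ¬ DependsOn D B [] x := by
      simpa [DependsOn] using hq x List.mem_cons_self
    simp only [viewWord, hnil, hx, if_false]

theorem exists_viewWord_append (p q : List A) :
    ∃ k, viewWord D B (p ++ q) = k ++ viewWord D B q ∧ k.Sublist p := by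
  induction p with
  | nil => exact ⟨[], rfl, List.nil_sublist _⟩
  | cons x p ih =>
    obtain ⟨k, hk, hsub⟩ := ih
    by_cases h : DependsOn D B (viewWord D B (p ++ q)) x
    · exact ⟨x :: k, by simp only [List.cons_append, viewWord, if_pos h, hk], hsub.cons_cons x⟩
    · exact ⟨k, by simp only [List.cons_append, viewWord, if_neg h, hk], hsub.cons x⟩

theorem viewWord_append_sublist {w r : List A} (hr : ∀ x ∈ r, ∀ b ∈ B, ¬ D x b) :
    (viewWord D B (w ++ r)).Sublist w := by
  obtain ⟨k, hk, hsub⟩ := exists_viewWord_append (D := D) (B := B) w r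
  rwa [hk, viewWord_eq_nil hr, List.append_nil]

theorem exists_traceRel_viewWord_append (u : List A) :
    ∃ d, TraceRel D u (viewWord D B u ++ d) ∧ ∀ x ∈ d, ∀ b ∈ B, ¬ D x b := by
  induction u with
  | nil => exact ⟨[], .refl _, by simp⟩
  | cons x xs ih =>
    obtain ⟨d, hd, hdB⟩ := ih
    by_cases h : DependsOn D B (viewWord D B xs) x
    · refine ⟨d, ?_, hdB⟩
      rw [viewWord, if_pos h]
      exact hd.append_left [x]
    · have hxB : ∀ b ∈ B, ¬ D x b := fun b hb hxb => h (Or.inl ⟨b, hb, hxb⟩)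
      have hxv : ∀ y ∈ viewWord D B xs, ¬ D x y := fun y hy hxy => h (Or.inr ⟨y, hy, hxy⟩)
      refine ⟨x :: d, ?_, ?_⟩
      · rw [viewWord, if_neg h]
        exact (hd.append_left [x]).trans (TraceRel.cons_append_of_indep _ _ hxv)
      · simpa only [List.mem_cons, forall_eq_or_imp] using ⟨hxB, hdB⟩

/-- Since `D x x`, an occurrence of `x` in `p` depends on the kept occurrence in `viewWord q`. -/
theorem count_viewWord_append [DecidableEq A] {x : A} {q : List A} (hxx : D x x)
    (hx : x ∈ viewWord D B q) (p : List A) :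
    (viewWord D B (p ++ q)).count x = p.count x + (viewWord D B q).count x := by
  induction p with
  | nil => simp
  | cons y p ih =>
    have hmem : x ∈ viewWord D B (p ++ q) := by
      rw [← List.count_pos_iff, ih]
      exact Nat.add_pos_right _ (List.count_pos_iff.mpr hx)
    by_cases h : DependsOn D B (viewWord D B (p ++ q)) y
    · simp only [List.cons_append, viewWord, if_pos h, List.count_cons, ih]
      omega
    · have hyx : y ≠ x := by
        rintro rfl
        exact h (Or.inr ⟨y, hmem, hxx⟩)
      simp [List.cons_append, viewWord, if_neg h, ih, hyx]

theorem viewWord_append_eq_of_traceRel (hrefl : ∀ a, D a a) {p q w : List A}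
    (h : TraceRel D (p ++ w) (viewWord D B (p ++ q))) :
    viewWord D B (p ++ q) = p ++ viewWord D B q := by
  classical
  obtain ⟨k, hk, hsub⟩ := exists_viewWord_append (D := D) (B := B) p q
  have hcount : ∀ x, k.count x = p.count x := by
    intro x
    refine le_antisymm (hsub.count_le x) (not_lt.mp fun hlt => ?_)
    have hperm := (hk ▸ h).perm.count_eq x
    simp only [List.count_append] at hperm
    have hx : x ∈ viewWord D B q := List.count_pos_iff.mp (by omega)
    have := count_viewWord_append (hrefl x) hx p
    rw [hk, List.count_append] at this
    omega
  rw [hk, hsub.eq_of_length (List.perm_iff_count.mpr hcount).length_eq]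

namespace Trace

theorem isView_mk_viewWord (hsymm : ∀ a b, D a b → D b a) (c : List A) :
    IsView B (mk D c) (mk D (viewWord D B c)) := by
  obtain ⟨d, hd, hdB⟩ := exists_traceRel_viewWord_append (D := D) (B := B) c
  refine ⟨⟨mk D d, mk_eq_mk.mpr hd.symm, indepSet_mk.mpr hdB⟩, fun w' v' h hv => ?_⟩
  induction w' using Trace.ind with | mk_case w => ?_
  induction v' using Trace.ind with | mk_case r => ?_
  rw [mk_mul_mk, mk_eq_mk] at h
  calc (viewWord D B c).length = (viewWord D B (w ++ r)).length :=
        (h.viewWord hsymm).perm.length_eq.symm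
    _ ≤ w.length := (viewWord_append_sublist (indepSet_mk.mp hv)).length_le

theorem IsView.eq_mk_viewWord (hsymm : ∀ a b, D a b → D b a) {c : List A} {t : Trace D}
    (ht : IsView B (mk D c) t) : t = mk D (viewWord D B c) := by
  induction t using Trace.ind with | mk_case w => ?_
  obtain ⟨⟨v, hv, hvB⟩, hmin⟩ := ht
  induction v using Trace.ind with | mk_case r => ?_
  rw [mk_mul_mk, mk_eq_mk] at hv
  have hsub := viewWord_append_sublist (D := D) (B := B) (w := w) (indepSet_mk.mp hvB)
  have hlen := (hv.viewWord (B := B) hsymm).perm.length_eq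
  obtain ⟨⟨d, hd, hdB⟩, -⟩ := isView_mk_viewWord (B := B) hsymm c
  have hle : w.length ≤ (viewWord D B c).length := hmin _ _ hd hdB
  have hw : viewWord D B (w ++ r) = w :=
    hsub.eq_of_length (le_antisymm hsub.length_le (hlen ▸ hle))
  rw [mk_eq_mk, ← hw]
  exact hv.viewWord hsymm

theorem view_mk (hsymm : ∀ a b, D a b → D b a) (c : List A) :
    view B (mk D c) = mk D (viewWord D B c) :=
  IsView.eq_mk_viewWord hsymm (Classical.epsilon_spec ⟨_, isView_mk_viewWord hsymm c⟩)

end Trace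

end MazTrace

open MazTrace in
theorem prefix_view_iff_general {A : Type*} (D : A → A → Prop)
    (hrefl : ∀ a, D a a) (hsymm : ∀ a b, D a b → D b a)
    (B : Set A) (u v : Trace D) :
    u.Prefix (Trace.view B (u * v)) ↔ Trace.view B (u * v) = u * Trace.view B v := by
  induction u using Trace.ind with | mk_case p => ?_
  induction v using Trace.ind with | mk_case q => ?_
  rw [Trace.mk_mul_mk, Trace.view_mk hsymm, Trace.view_mk hsymm]
  refine ⟨fun ⟨w, hw⟩ => ?_, fun h => ⟨_, h.symm⟩⟩
  induction w using Trace.ind with | mk_case w => ?_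
  rw [Trace.mk_mul_mk, Trace.mk_eq_mk] at hw
  rw [viewWord_append_eq_of_traceRel hrefl hw, Trace.mk_mul_mk]

open MazTrace in
/-- `u ⊑ view_B(uv)` iff `view_B(uv) = u · view_B(v)`. -/
theorem prefix_view_iff {A : Type*} [Finite A] (D : A → A → Prop)
    (hrefl : ∀ a, D a a) (hsymm : ∀ a b, D a b → D b a)
    (B : Set A) (u v : Trace D) :
    u.Prefix (Trace.view B (u * v)) ↔ Trace.view B (u * v) = u * Trace.view B v :=
  prefix_view_iff_general D hrefl hsymm B u v
end
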